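/- In the leaf-order setup for a connected generalized block graph G (with common intersection A, merged graph G', and G'' the induced subgraph of G on [n]∖A), set J_1 = 𝔍_{G'} and J_2 = (x_{kj} : 1 ≤ k ≤ m, j ∈ A) + 𝔍_{G''}. Then for the lexicographic order <, ini_<(J_1 + J_2) = ini_<(J_1) + ini_<(J_2) and ini_<(𝔍_G) = ini_<(J_1 ∩ J_2) = ini_<(J_1) ∩ ini_<(J_2). -/

import Mathlib

open scoped TensorProduct

namespace GBEI

/-! ### Graph-theoretic notions -/

/-- Number of connected components of a graph. -/
noncomputable def ncomp {V : Type} (G : SimpleGraph V) : ℕ :=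
  Nat.card G.ConnectedComponent

/-- Number of connected components of the induced subgraph on the complement of `T`. -/
noncomputable def ncompDel {V : Type} (G : SimpleGraph V) (T : Finset V) : ℕ :=
  Nat.card (G.induce ((↑T : Set V)ᶜ)).ConnectedComponent

/-- `T` is a cut set: deleting `T` increases the number of connected components. -/
def IsCutSet {V : Type} (G : SimpleGraph V) (T : Finset V) : Prop :=
  ncomp G < ncompDel G T

/-- `T` is a cut set which is minimal with respect to inclusion. -/
def IsMinimalCutSet {V : Type} (G : SimpleGraph V) (T : Finset V) : Prop :=
  IsCutSet G T ∧ ∀ T' ⊆ T, IsCutSet G T' → T' = T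

/-- `aCount G i` is the number of minimal cut sets of `G` of cardinality `i`. -/
noncomputable def aCount {V : Type} (G : SimpleGraph V) (i : ℕ) : ℕ :=
  Set.ncard {T : Finset V | IsMinimalCutSet G T ∧ T.card = i}

/-- `T` has the cut point property: for every `i ∈ T`,
`c(T \ {i}) < c(T)` where `c(T)` is the number of connected components of `G` restricted
to the complement of `T`. -/
def HasCutPointProperty {V : Type} [DecidableEq V] (G : SimpleGraph V) (T : Finset V) : Prop :=
  ∀ i ∈ T, ncompDel G (T.erase i) < ncompDel G T

/-- A graph is chordal if it has no induced cycle of length at least 4. -/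
def Chordal {V : Type} (G : SimpleGraph V) : Prop :=
  ∀ k : ℕ, 4 ≤ k → IsEmpty (SimpleGraph.cycleGraph k ↪g G)

/-- A maximal clique of `G`, as a finite set of vertices. -/
def IsMaxClique {V : Type} (G : SimpleGraph V) (s : Finset V) : Prop :=
  G.IsClique (↑s : Set V) ∧ ∀ t : Finset V, G.IsClique (↑t : Set V) → s ⊆ t → s = t

/-- A generalized block graph: a chordal graph in which, for any three (distinct) maximal
cliques with nonempty common intersection, the pairwise intersections all coincide. -/
def IsGeneralizedBlockGraph {V : Type} [DecidableEq V] (G : SimpleGraph V) : Prop :=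
  Chordal G ∧
    ∀ F₁ F₂ F₃ : Finset V, IsMaxClique G F₁ → IsMaxClique G F₂ → IsMaxClique G F₃ →
      F₁ ≠ F₂ → F₁ ≠ F₃ → F₂ ≠ F₃ → (F₁ ∩ F₂ ∩ F₃).Nonempty →
      F₁ ∩ F₂ = F₂ ∩ F₃ ∧ F₁ ∩ F₃ = F₂ ∩ F₃

/-- A block graph: a chordal graph in which any two distinct maximal cliques meet in at
most one vertex. -/
def IsBlockGraph {V : Type} [DecidableEq V] (G : SimpleGraph V) : Prop :=
  Chordal G ∧
    ∀ F₁ F₂ : Finset V, IsMaxClique G F₁ → IsMaxClique G F₂ → F₁ ≠ F₂ → (F₁ ∩ F₂).card ≤ 1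

/-- The complete graph on a finite set `B` of vertices (with all other vertices isolated). -/
def cliqueOn {V : Type} (B : Finset V) : SimpleGraph V where
  Adj u v := u ≠ v ∧ u ∈ B ∧ v ∈ B
  symm := ⟨fun u v ⟨h1, h2, h3⟩ => ⟨h1.symm, h3, h2⟩⟩
  loopless := ⟨fun u h => h.1 rfl⟩

/-- The graph obtained from `G` by deleting all vertices in `A` (keeping the ambient
vertex type; deleted vertices become isolated). Its edges are exactly the edges of the
induced subgraph of `G` on the complement of `A`. -/
def delVerts {V : Type} (G : SimpleGraph V) (A : Finset V) : SimpleGraph V where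
  Adj u v := G.Adj u v ∧ u ∉ A ∧ v ∉ A
  symm := ⟨fun u v ⟨h1, h2, h3⟩ => ⟨h1.symm, h3, h2⟩⟩
  loopless := ⟨fun u h => G.ne_of_adj h.1 rfl⟩

/-! ### The polynomial ring and generalized binomial edge ideals -/

/-- The polynomial ring `K[x_{kj} : 1 ≤ k ≤ m, 1 ≤ j ≤ n]`; the variable type carries the
lexicographic order in which `x_{11}` is the smallest index (hence the largest variable for
the induced lexicographic monomial order). -/
abbrev PolyS (K : Type) [Field K] (m n : ℕ) : Type := MvPolynomial (Fin m ×ₗ Fin n) K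

/-- The variable `x_{kj}`. -/
noncomputable def xv (K : Type) [Field K] {m n : ℕ} (k : Fin m) (j : Fin n) : PolyS K m n :=
  MvPolynomial.X (toLex (k, j))

/-- The 2-minor `[k,l|i,j] = x_{ki} x_{lj} - x_{li} x_{kj}`. -/
noncomputable def pminor (K : Type) [Field K] {m n : ℕ} (k l : Fin m) (i j : Fin n) :
    PolyS K m n :=
  xv K k i * xv K l j - xv K l i * xv K k j

/-- The generalized binomial edge ideal `𝔍_G` of a graph `G` on `[n]`. -/
noncomputable def gbei (K : Type) [Field K] (m : ℕ) {n : ℕ} (G : SimpleGraph (Fin n)) :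
    Ideal (PolyS K m n) :=
  Ideal.span {f | ∃ (k l : Fin m) (i j : Fin n),
    k < l ∧ i < j ∧ G.Adj i j ∧ f = pminor K k l i j}

/-- The ideal generated by the variables `x_{kj}`, `1 ≤ k ≤ m`, `j ∈ A`. -/
noncomputable def varsIdeal (K : Type) [Field K] (m : ℕ) {n : ℕ} (A : Finset (Fin n)) :
    Ideal (PolyS K m n) :=
  Ideal.span {f | ∃ (k : Fin m) (j : Fin n), j ∈ A ∧ f = xv K k j}

/-! ### Lexicographic initial ideals -/

/-- `d` is the exponent vector of the lexicographic leading monomial of `p`, for the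
lexicographic order with `x_{11} > ⋯ > x_{1n} > x_{21} > ⋯ > x_{mn}`. -/
def IsLeadExp (K : Type) [Field K] {m n : ℕ} (p : PolyS K m n)
    (d : (Fin m ×ₗ Fin n) →₀ ℕ) : Prop :=
  d ∈ p.support ∧ ∀ e ∈ p.support, e ≠ d → toLex e < toLex d

/-- The initial ideal of `I` with respect to the lexicographic order: the ideal generated
by the leading monomials of the nonzero elements of `I`. -/
noncomputable def iniIdeal (K : Type) [Field K] {m n : ℕ} (I : Ideal (PolyS K m n)) :
    Ideal (PolyS K m n) :=
  Ideal.span {f | ∃ p ∈ I, ∃ d, IsLeadExp K p d ∧ f = MvPolynomial.monomial d (1 : K)}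

/-! ### Projective dimension, depth and Castelnuovo–Mumford regularity -/

/-- `M` admits a resolution `0 → F_k → ⋯ → F_1 → F_0 → M → 0` by finitely generated
free `R`-modules. -/
def HasFreeResLen (R : Type) [CommRing R] (M : Type) [AddCommGroup M] [Module R M]
    (k : ℕ) : Prop :=
  ∃ (ι : ℕ → Type) (_ : ∀ i, Finite (ι i))
    (d : ∀ i : ℕ, (ι (i + 1) →₀ R) →ₗ[R] (ι i →₀ R)) (ε : (ι 0 →₀ R) →ₗ[R] M),
      (∀ i, k < i → IsEmpty (ι i)) ∧
      Function.Surjective ε ∧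
      Function.Exact (d 0) ε ∧
      ∀ i, Function.Exact (d (i + 1)) (d i)

/-- The projective dimension of `M`: the smallest possible length of a finite free
resolution of `M`. -/
noncomputable def projDim (R : Type) [CommRing R] (M : Type) [AddCommGroup M]
    [Module R M] : ℕ :=
  sInf {k | HasFreeResLen R M k}

/-- The depth of `S/I` (with respect to the irrelevant maximal ideal), via the
Auslander–Buchsbaum formula: `depth S/I = (number of variables) - projdim S/I`. -/
noncomputable def depthQuot {σ : Type} (K : Type) [Field K] (I : Ideal (MvPolynomial σ K)) :
    ℕ :=
  Nat.card σ - projDim (MvPolynomial σ K) (MvPolynomial σ K ⧸ I)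

/-- `S/I` admits a graded free resolution (by finitely generated graded free modules,
with generator degrees `degs`) in which all shifts `j` occurring in homological degree `i`
satisfy `j ≤ r + i`.  The minimum of all such `r` is the Castelnuovo–Mumford regularity
`max { j - i : β_{ij}(S/I) ≠ 0 }`. -/
def HasGradedFreeResRegLE {σ : Type} (K : Type) [Field K] (I : Ideal (MvPolynomial σ K))
    (r : ℕ) : Prop :=
  ∃ (len : ℕ) (ι : ℕ → Type) (_ : ∀ i, Finite (ι i)) (degs : ∀ i, ι i → ℕ)
    (d : ∀ i : ℕ, (ι (i + 1) →₀ MvPolynomial σ K) →ₗ[MvPolynomial σ K] (ι i →₀ MvPolynomial σ K))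
    (ε : (ι 0 →₀ MvPolynomial σ K) →ₗ[MvPolynomial σ K] (MvPolynomial σ K ⧸ I)),
      (∀ i, len < i → IsEmpty (ι i)) ∧
      Function.Surjective ε ∧
      Function.Exact (d 0) ε ∧
      (∀ i, Function.Exact (d (i + 1)) (d i)) ∧
      (∀ a : ι 0, ∃ p : MvPolynomial σ K,
        p.IsHomogeneous (degs 0 a) ∧ ε (Finsupp.single a 1) = Ideal.Quotient.mk I p) ∧
      (∀ (i : ℕ) (a : ι (i + 1)) (b : ι i),
        (d i (Finsupp.single a 1)) b = 0 ∨
        ∃ e, e + degs i b = degs (i + 1) a ∧ ((d i (Finsupp.single a 1)) b).IsHomogeneous e) ∧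
      (∀ (i : ℕ) (a : ι i), degs i a ≤ r + i)

/-- The Castelnuovo–Mumford regularity of `S/I`. -/
noncomputable def regQuot {σ : Type} (K : Type) [Field K] (I : Ideal (MvPolynomial σ K)) :
    ℕ :=
  sInf {r | HasGradedFreeResRegLE K I r}

/-- The height of a prime ideal `P` (junk value `0` if `P` is not prime). -/
noncomputable def primeHeight {R : Type} [CommRing R] (P : Ideal R) : ℕ∞ :=
  ⨆ h : P.IsPrime, Order.height (⟨P, h⟩ : PrimeSpectrum R)

/-- An ideal is unmixed if all of its minimal primes have the same height. -/
def IsUnmixed {R : Type} [CommRing R] (I : Ideal R) : Prop :=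
  ∀ P ∈ I.minimalPrimes, ∀ Q ∈ I.minimalPrimes, primeHeight P = primeHeight Q

end GBEI

namespace GBEI

/-- The generalized binomial edge ideal of (the restriction of) `G` inside the polynomial
ring `K[x_{kj} : 1 ≤ k ≤ m, j ∈ V]` on a subset `V` of the vertices. -/
noncomputable def gbeiOn (K : Type) [Field K] (m : ℕ) {n : ℕ} (G : SimpleGraph (Fin n))
    (V : Set (Fin n)) : Ideal (MvPolynomial (Fin m × V) K) :=
  Ideal.span {f | ∃ (k l : Fin m) (i j : V),
    k < l ∧ (i : Fin n) < (j : Fin n) ∧ G.Adj (i : Fin n) (j : Fin n) ∧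
    f = MvPolynomial.X (k, i) * MvPolynomial.X (l, j) -
        MvPolynomial.X (l, i) * MvPolynomial.X (k, j)}

/-- The degree-`dd` homogeneous component of `S/I`, the image of the space of homogeneous
polynomials of degree `dd`. -/
noncomputable def quotDeg {σ : Type} (K : Type) [Field K] (I : Ideal (MvPolynomial σ K))
    (dd : ℕ) : Submodule K (MvPolynomial σ K ⧸ I) :=
  Submodule.map (Ideal.Quotient.mkₐ K I).toLinearMap (MvPolynomial.homogeneousSubmodule σ K dd)

/-- The minimal prime `P_T(G)` of `𝔍_G` associated with a set `T` having the cut point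
property: it is generated by the variables `x_{kj}`, `j ∈ T`, together with the 2-minors
`[k,l|i,j]` for all pairs `i < j` of vertices lying in a common connected component of the
restriction of `G` to the complement of `T`. -/
noncomputable def cutPrime (K : Type) [Field K] (m : ℕ) {n : ℕ} (G : SimpleGraph (Fin n))
    (T : Finset (Fin n)) : Ideal (PolyS K m n) :=
  Ideal.span ({f | ∃ (k : Fin m) (j : Fin n), j ∈ T ∧ f = xv K k j} ∪
    {f | ∃ (k l : Fin m) (i j : Fin n) (hi : i ∈ ((↑T : Set (Fin n))ᶜ))
      (hj : j ∈ ((↑T : Set (Fin n))ᶜ)),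
      k < l ∧ i < j ∧ (G.induce ((↑T : Set (Fin n))ᶜ)).Reachable ⟨i, hi⟩ ⟨j, hj⟩ ∧
      f = pminor K k l i j})

/-!
Let `κ` be the substitution killing the variables `x_{kj}`, `j ∈ A`. A new edge `{u, v}` of `G'`
avoids `A` and both `u` and `v` are adjacent in `G` to every `a ∈ A`, so `κ` fixes its minors and
`x_{ka}` times such a minor lies in `𝔍_G`. Splitting `f ∈ J₁ ∩ J₂` as `g + h` with `g ∈ 𝔍_G` and `h`
in the ideal `N` of new minors, `h - κ h ∈ (x_A) N ⊆ 𝔍_G` while `κ f, κ g ∈ 𝔍_{G ∖ A} ⊆ 𝔍_G`;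
hence `𝔍_G = J₁ ∩ J₂`.

Since `J₁ + J₂ = (x_A) + 𝔍_{G' ∖ A}` and `κ` maps `𝔍_{G' ∖ A}` into itself, a leading monomial of
`J₁ + J₂` is either divisible by some `x_{ka}` or the leading monomial of an element of
`𝔍_{G' ∖ A} ⊆ J₁`. Finally all ideals are homogeneous and passing to the initial ideal preserves
the dimension of every graded piece, so `dim (I ∩ J)_d = dim I_d + dim J_d - dim (I + J)_d` turns
`ini(J₁ + J₂) = ini J₁ + ini J₂` into `ini(J₁ ∩ J₂) = ini J₁ ∩ ini J₂`.
-/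

open MvPolynomial

attribute [local instance] MvPolynomial.gradedAlgebra

section DegreePiece

variable {σ R : Type*} [CommSemiring R]

theorem _root_.MvPolynomial.IsHomogeneous.degree_eq_of_mem_support {p : MvPolynomial σ R} {d : ℕ}
    (hp : p.IsHomogeneous d) {w : σ →₀ ℕ} (hw : w ∈ p.support) : w.degree = d := by
  rw [Finsupp.degree_eq_weight_one]
  exact hp (mem_support_iff.mp hw)

noncomputable def degreePiece (I : Ideal (MvPolynomial σ R)) (d : ℕ) :
    Submodule R (MvPolynomial σ R) :=
  I.restrictScalars R ⊓ homogeneousSubmodule σ R d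

theorem degreePiece_mono {I J : Ideal (MvPolynomial σ R)} (h : I ≤ J) (d : ℕ) :
    degreePiece I d ≤ degreePiece J d :=
  inf_le_inf_right _ h

theorem degreePiece_inf (I J : Ideal (MvPolynomial σ R)) (d : ℕ) :
    degreePiece (I ⊓ J) d = degreePiece I d ⊓ degreePiece J d := by
  ext p
  simp only [degreePiece, Submodule.mem_inf, Submodule.restrictScalars_mem]
  tauto

theorem degreePiece_sup {I J : Ideal (MvPolynomial σ R)}
    (hI : I.IsHomogeneous (homogeneousSubmodule σ R))
    (hJ : J.IsHomogeneous (homogeneousSubmodule σ R)) (d : ℕ) :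
    degreePiece (I ⊔ J) d = degreePiece I d ⊔ degreePiece J d := by
  refine le_antisymm ?_ (sup_le (degreePiece_mono le_sup_left d) (degreePiece_mono le_sup_right d))
  rintro _ ⟨hp, hpd⟩
  obtain ⟨a, ha, b, hb, rfl⟩ := Submodule.mem_sup.mp hp
  rw [← homogeneousComponent_eq_self hpd, map_add]
  exact Submodule.add_mem_sup
    ⟨homogeneousComponent_mem_of_mem hI ha d, homogeneousComponent_mem d a⟩
    ⟨homogeneousComponent_mem_of_mem hJ hb d, homogeneousComponent_mem d b⟩

theorem eq_of_le_of_degreePiece_le {I J : Ideal (MvPolynomial σ R)} (hIJ : I ≤ J)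
    (hJ : J.IsHomogeneous (homogeneousSubmodule σ R))
    (h : ∀ d, degreePiece J d ≤ degreePiece I d) : I = J := by
  refine le_antisymm hIJ fun p hp => ?_
  rw [← sum_homogeneousComponent p]
  exact I.sum_mem fun d _ =>
    (h d ⟨homogeneousComponent_mem_of_mem hJ hp d, homogeneousComponent_mem d p⟩).1

instance [Finite σ] {R : Type*} [Field R] (I : Ideal (MvPolynomial σ R)) (d : ℕ) :
    FiniteDimensional R (degreePiece I d) :=
  have : Module.Finite R (homogeneousSubmodule σ R d) :=
    Module.Finite.iff_fg.mpr (homogeneousSubmodule_fg σ R d)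
  Submodule.finiteDimensional_of_le inf_le_right

end DegreePiece

section KillVars

variable {σ R : Type*} [CommRing R] (s : Set σ)

noncomputable def killVars : MvPolynomial σ R →ₐ[R] MvPolynomial σ R :=
  aeval (sᶜ.indicator X)

variable {s}

theorem killVars_X_of_mem {v : σ} (hv : v ∈ s) : killVars (R := R) s (X v) = 0 := by
  simp [killVars, hv]

theorem killVars_X_of_notMem {v : σ} (hv : v ∉ s) : killVars (R := R) s (X v) = X v := by
  simp [killVars, hv]

theorem killVars_mem_supported (p : MvPolynomial σ R) : killVars s p ∈ supported R sᶜ := by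
  induction p using MvPolynomial.induction_on with
  | C a =>
    rw [← algebraMap_eq, AlgHom.commutes]
    exact (supported R sᶜ).algebraMap_mem a
  | add p q hp hq => exact map_add (killVars s) p q ▸ Subalgebra.add_mem _ hp hq
  | mul_X p v hp =>
    rw [map_mul]
    refine Subalgebra.mul_mem _ hp ?_
    by_cases hv : v ∈ s
    · simp [killVars_X_of_mem hv]
    · rw [killVars_X_of_notMem hv]
      exact Algebra.subset_adjoin ⟨v, hv, rfl⟩

theorem sub_killVars_mem_span (p : MvPolynomial σ R) :
    p - killVars s p ∈ Ideal.span (X '' s) := by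
  induction p using MvPolynomial.induction_on with
  | C a => simp
  | add p q hp hq => simpa [add_sub_add_comm] using Ideal.add_mem _ hp hq
  | mul_X p v hp =>
    have : p * X v - killVars s (p * X v) =
        (p - killVars s p) * X v + killVars s p * (X v - killVars s (X v)) := by
      rw [map_mul]; ring
    rw [this]
    refine Ideal.add_mem _ (Ideal.mul_mem_right _ _ hp) (Ideal.mul_mem_left _ _ ?_)
    by_cases hv : v ∈ s
    · simpa [killVars_X_of_mem hv] using Ideal.subset_span (Set.mem_image_of_mem X hv)
    · simp [killVars_X_of_notMem hv]

theorem killVars_eq_zero_of_mem_span {p : MvPolynomial σ R} (hp : p ∈ Ideal.span (X '' s)) :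
    killVars s p = 0 := by
  suffices Ideal.span (X '' s) ≤ RingHom.ker (killVars (R := R) s) from this hp
  rw [Ideal.span_le]
  rintro _ ⟨v, hv, rfl⟩
  exact killVars_X_of_mem hv

theorem coeff_killVars_of_forall {w : σ →₀ ℕ} (hw : ∀ v ∈ s, w v = 0) (p : MvPolynomial σ R) :
    coeff w (killVars s p) = coeff w p := by
  have h := mt (mem_ideal_span_X_image.mp (sub_killVars_mem_span (s := s) p) w)
    (by simpa using hw)
  rw [mem_support_iff, not_not, coeff_sub, sub_eq_zero] at h
  exact h.symm

theorem coeff_killVars_of_exists {w : σ →₀ ℕ} (hw : ∃ v ∈ s, w v ≠ 0) (p : MvPolynomial σ R) :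
    coeff w (killVars s p) = 0 := by
  obtain ⟨v, hvs, hwv⟩ := hw
  by_contra hne
  have hv : v ∈ (killVars s p).vars :=
    (mem_vars_iff_mem_support v).mpr ⟨w, mem_support_iff.mpr hne, Finsupp.mem_support_iff.mpr hwv⟩
  exact mem_supported.mp (killVars_mem_supported p) hv hvs

theorem support_killVars_subset (p : MvPolynomial σ R) : (killVars s p).support ⊆ p.support := by
  intro w hw
  by_cases hws : ∀ v ∈ s, w v = 0
  · rwa [mem_support_iff, coeff_killVars_of_forall hws, ← mem_support_iff] at hw
  · simp only [not_forall, exists_prop] at hws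
    exact absurd (coeff_killVars_of_exists hws p) (mem_support_iff.mp hw)

end KillVars

theorem sub_map_mem_mul_span {R F : Type*} [CommRing R] [FunLike F R R] [RingHomClass F R R]
    (φ : F) {V : Ideal R} {S : Set R} (hV : ∀ x, x - φ x ∈ V) (hS : ∀ g ∈ S, φ g = g)
    {p : R} (hp : p ∈ Ideal.span S) : p - φ p ∈ V * Ideal.span S := by
  induction hp using Submodule.span_induction with
  | mem g hg => simp [hS g hg]
  | zero => simp
  | add p q _ _ hp hq => simpa [add_sub_add_comm] using Ideal.add_mem _ hp hq
  | smul c p hpS hp =>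
    have : c • p - φ (c • p) = (c - φ c) * p + φ c * (p - φ p) := by
      rw [smul_eq_mul, map_mul]; ring
    rw [this]
    exact Ideal.add_mem _ (Ideal.mul_mem_mul (hV c) hpS) (Ideal.mul_mem_left _ _ hp)

theorem sup_cliqueOn_adj_of_not_adj {V ι : Type} [Fintype ι] [DecidableEq V] {G : SimpleGraph V}
    {C : Finset V} {D : ι → Finset V} {A : Finset V} (hC : G.IsClique (C : Set V))
    (hD : ∀ i, G.IsClique (D i : Set V)) (hA : ∀ i, D i ∩ C = A) {u v : V}
    (huv : (G ⊔ cliqueOn (C ∪ Finset.univ.biUnion D)).Adj u v) (hG : ¬ G.Adj u v) :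
    u ∉ A ∧ v ∉ A ∧ ∀ a ∈ A, G.Adj a u ∧ G.Adj a v := by
  obtain ⟨hne, hu, hv⟩ : u ≠ v ∧ u ∈ C ∪ Finset.univ.biUnion D ∧ v ∈ C ∪ Finset.univ.biUnion D :=
    huv.resolve_left hG
  obtain ⟨i, -⟩ : ∃ i, u ∈ D i ∨ v ∈ D i := by
    by_contra! h
    simp only [Finset.mem_union, Finset.mem_biUnion, Finset.mem_univ, true_and] at hu hv
    exact hG (hC (hu.resolve_right fun ⟨j, hj⟩ => (h j).1 hj)
      (hv.resolve_right fun ⟨j, hj⟩ => (h j).2 hj) hne)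
  have hadj : ∀ w ∈ C ∪ Finset.univ.biUnion D, ∀ a ∈ A, a ≠ w → G.Adj a w := by
    intro w hw a ha haw
    rcases Finset.mem_union.mp hw with hwC | hwD
    · exact hC (Finset.inter_subset_right (hA i ▸ ha : a ∈ D i ∩ C)) hwC haw
    · obtain ⟨j, -, hwj⟩ := Finset.mem_biUnion.mp hwD
      exact hD j (Finset.inter_subset_left (hA j ▸ ha : a ∈ D j ∩ C)) hwj haw
  have huA : u ∉ A := fun ha => hG (hadj v hv u ha hne)
  have hvA : v ∉ A := fun ha => hG (hadj u hu v ha hne.symm).symm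
  exact ⟨huA, hvA, fun a ha => ⟨hadj u hu a ha (ne_of_mem_of_not_mem ha huA),
    hadj v hv a ha (ne_of_mem_of_not_mem ha hvA)⟩⟩

section Polynomials

variable {K : Type} [Field K] {m n : ℕ}

theorem isLeadExp_iff {p : PolyS K m n} {d : (Fin m ×ₗ Fin n) →₀ ℕ} :
    IsLeadExp K p d ↔ p ≠ 0 ∧ MonomialOrder.lex.degree p = d := by
  constructor
  · rintro ⟨hd, hlt⟩
    have hp : p ≠ 0 := fun h => by simp [h] at hd
    refine ⟨hp, ?_⟩
    by_contra hne
    exact (MonomialOrder.lex_lt_iff.mp (hlt _ (MonomialOrder.lex.degree_mem_support hp) hne)).not_ge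
      (MonomialOrder.lex.le_degree hd)
  · rintro ⟨hp, rfl⟩
    exact ⟨MonomialOrder.lex.degree_mem_support hp, fun e he hne =>
      lt_of_le_of_ne (MonomialOrder.lex.le_degree he) (fun h => hne (toLex.injective h))⟩

theorem exists_isLeadExp {p : PolyS K m n} (hp : p ≠ 0) : ∃ d, IsLeadExp K p d :=
  ⟨_, isLeadExp_iff.mpr ⟨hp, rfl⟩⟩

theorem isLeadExp_monomial_one (d : (Fin m ×ₗ Fin n) →₀ ℕ) :
    IsLeadExp K (monomial d (1 : K)) d := by
  classical
  exact isLeadExp_iff.mpr ⟨by simp, by simp [MonomialOrder.degree_monomial]⟩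

theorem IsLeadExp.monomial_one_mul {p : PolyS K m n} {d : (Fin m ×ₗ Fin n) →₀ ℕ}
    (h : IsLeadExp K p d) (e : (Fin m ×ₗ Fin n) →₀ ℕ) :
    IsLeadExp K (monomial e (1 : K) * p) (e + d) := by
  obtain ⟨hp, rfl⟩ := isLeadExp_iff.mp h
  have he := isLeadExp_iff.mp (isLeadExp_monomial_one (K := K) e)
  refine isLeadExp_iff.mpr ⟨mul_ne_zero he.1 hp, ?_⟩
  rw [MonomialOrder.degree_mul he.1 hp, he.2]

theorem IsLeadExp.of_support_subset {p q : PolyS K m n} {d : (Fin m ×ₗ Fin n) →₀ ℕ}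
    (h : IsLeadExp K p d) (hd : d ∈ q.support) (hqp : q.support ⊆ p.support) :
    IsLeadExp K q d :=
  ⟨hd, fun e he hne => h.2 e (hqp he) hne⟩

theorem IsLeadExp.coeff_eq_zero_of_lt {p : PolyS K m n} {d w : (Fin m ×ₗ Fin n) →₀ ℕ}
    (h : IsLeadExp K p d) (hw : toLex d < toLex w) : coeff w p = 0 :=
  notMem_support_iff.mp fun hw' => (h.2 w hw' (fun h' => hw.ne (by rw [h']))).not_gt hw

theorem iniIdeal_mono {I J : Ideal (PolyS K m n)} (h : I ≤ J) : iniIdeal K I ≤ iniIdeal K J :=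
  Ideal.span_mono fun _ ⟨p, hp, d, hd, hf⟩ => ⟨p, h hp, d, hd, hf⟩

theorem monomial_mem_iniIdeal {I : Ideal (PolyS K m n)} {p : PolyS K m n}
    {d : (Fin m ×ₗ Fin n) →₀ ℕ} (hp : p ∈ I) (hd : IsLeadExp K p d) :
    monomial d (1 : K) ∈ iniIdeal K I :=
  Ideal.subset_span ⟨p, hp, d, hd, rfl⟩

theorem iniIdeal_eq_span_monomial_image (I : Ideal (PolyS K m n)) :
    iniIdeal K I =
      Ideal.span ((fun d => monomial d (1 : K)) '' {d | ∃ p ∈ I, IsLeadExp K p d}) := by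
  unfold iniIdeal
  congr 1
  ext f
  constructor
  · rintro ⟨p, hp, d, hd, rfl⟩
    exact ⟨d, ⟨p, hp, hd⟩, rfl⟩
  · rintro ⟨d, ⟨p, hp, hd⟩, rfl⟩
    exact ⟨p, hp, d, hd, rfl⟩

theorem isHomogeneous_iniIdeal (I : Ideal (PolyS K m n)) :
    (iniIdeal K I).IsHomogeneous (homogeneousSubmodule _ K) := by
  rw [iniIdeal_eq_span_monomial_image]
  refine Ideal.homogeneous_span _ _ ?_
  rintro _ ⟨d, -, rfl⟩
  exact ⟨_, isHomogeneous_monomial _ rfl⟩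

theorem linearIndependent_of_isLeadExp {ι : Type*} {f : ι → PolyS K m n}
    {e : ι → (Fin m ×ₗ Fin n) →₀ ℕ} (he : Function.Injective e)
    (hf : ∀ i, IsLeadExp K (f i) (e i)) : LinearIndependent K f := by
  classical
  rw [linearIndependent_iff']
  intro s g hsum
  by_contra! hne
  obtain ⟨i₀, hi₀, hmax⟩ := (s.filter fun i => g i ≠ 0).exists_max_image (toLex ∘ e)
    (by simpa [Finset.Nonempty] using hne)
  rw [Finset.mem_filter] at hi₀
  have hcoeff := congrArg (coeff (e i₀)) hsum
  rw [coeff_sum, Finset.sum_eq_single_of_mem i₀ hi₀.1, coeff_zero, coeff_smul, smul_eq_mul]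
    at hcoeff
  · exact mul_ne_zero hi₀.2 (mem_support_iff.mp (hf i₀).1) hcoeff
  · intro i hi hii₀
    by_cases hgi : g i = 0
    · simp [hgi]
    · have hlt : toLex (e i) < toLex (e i₀) :=
        (hmax i (Finset.mem_filter.mpr ⟨hi, hgi⟩)).lt_of_ne fun h => hii₀ (he (toLex.injective h))
      rw [coeff_smul, (hf i).coeff_eq_zero_of_lt hlt, smul_zero]

def leadExps (W : Submodule K (PolyS K m n)) : Set ((Fin m ×ₗ Fin n) →₀ ℕ) :=
  {d | ∃ p ∈ W, IsLeadExp K p d}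

theorem finrank_eq_ncard_leadExps (W : Submodule K (PolyS K m n)) [FiniteDimensional K W] :
    Module.finrank K W = (leadExps W).ncard := by
  choose f hfW hf using fun d : leadExps W => d.2
  have hli : LinearIndependent K fun d => (⟨f d, hfW d⟩ : W) :=
    .of_comp W.subtype (linearIndependent_of_isLeadExp Subtype.val_injective hf)
  have : Finite (leadExps W) := hli.finite
  have : Fintype (leadExps W) := Fintype.ofFinite _
  rw [← Nat.card_coe_set_eq, Nat.card_eq_fintype_card]
  refine le_antisymm ?_ hli.fintype_card_le_finrank
  let Φ : W →ₗ[K] (leadExps W → K) := LinearMap.pi fun d => (lcoeff K d.1).comp W.subtype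
  have hΦ : Function.Injective Φ := by
    rw [← LinearMap.ker_eq_bot, Submodule.eq_bot_iff]
    intro p hp
    by_contra hp0
    obtain ⟨d, hd⟩ := exists_isLeadExp (Subtype.coe_ne_coe.mpr hp0 : (p : PolyS K m n) ≠ 0)
    exact mem_support_iff.mp hd.1 (congrFun hp ⟨d, p, p.2, hd⟩)
  simpa using LinearMap.finrank_le_finrank_of_injective hΦ

theorem IsLeadExp.homogeneousComponent {p : PolyS K m n} {d : (Fin m ×ₗ Fin n) →₀ ℕ}
    (h : IsLeadExp K p d) : IsLeadExp K (homogeneousComponent d.degree p) d := by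
  refine h.of_support_subset ?_ ?_ <;> rw [support_homogeneousComponent]
  · exact Finset.mem_filter.mpr ⟨h.1, rfl⟩
  · exact Finset.filter_subset _ _

theorem leadExps_degreePiece_iniIdeal {I : Ideal (PolyS K m n)}
    (hI : I.IsHomogeneous (homogeneousSubmodule _ K)) (d : ℕ) :
    leadExps (degreePiece (iniIdeal K I) d) = leadExps (degreePiece I d) := by
  ext w
  constructor
  · rintro ⟨q, ⟨hqI, hqd⟩, hq⟩
    have hwd : w.degree = d := hqd.degree_eq_of_mem_support hq.1
    rw [SetLike.mem_coe, Submodule.restrictScalars_mem, iniIdeal_eq_span_monomial_image,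
      mem_ideal_span_monomial_image] at hqI
    obtain ⟨u, ⟨p, hpI, hpu⟩, huw⟩ := hqI w hq.1
    have hwu : w - u + u = w := tsub_add_cancel_of_le huw
    -- `x^(w - u)` times the component of `p` carrying its leading term has leading exponent `w`
    refine ⟨monomial (w - u) 1 * homogeneousComponent u.degree p,
      ⟨I.mul_mem_left _ (homogeneousComponent_mem_of_mem hI hpI _), ?_⟩, ?_⟩
    · have := (isHomogeneous_monomial (d := w - u) (1 : K) rfl).mul
        (homogeneousComponent_isHomogeneous u.degree p)
      rwa [← map_add, hwu, hwd] at this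
    · simpa only [hwu] using hpu.homogeneousComponent.monomial_one_mul (w - u)
  · rintro ⟨p, ⟨hpI, hpd⟩, hp⟩
    exact ⟨monomial w 1, ⟨monomial_mem_iniIdeal hpI hp,
      isHomogeneous_monomial _ (hpd.degree_eq_of_mem_support hp.1)⟩, isLeadExp_monomial_one w⟩

theorem finrank_degreePiece_iniIdeal {I : Ideal (PolyS K m n)}
    (hI : I.IsHomogeneous (homogeneousSubmodule _ K)) (d : ℕ) :
    Module.finrank K (degreePiece (iniIdeal K I) d) = Module.finrank K (degreePiece I d) := by
  rw [finrank_eq_ncard_leadExps, finrank_eq_ncard_leadExps, leadExps_degreePiece_iniIdeal hI]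

theorem iniIdeal_inf_eq_of_iniIdeal_sup_eq {I J : Ideal (PolyS K m n)}
    (hI : I.IsHomogeneous (homogeneousSubmodule _ K))
    (hJ : J.IsHomogeneous (homogeneousSubmodule _ K))
    (h : iniIdeal K (I ⊔ J) = iniIdeal K I ⊔ iniIdeal K J) :
    iniIdeal K (I ⊓ J) = iniIdeal K I ⊓ iniIdeal K J := by
  have hle : iniIdeal K (I ⊓ J) ≤ iniIdeal K I ⊓ iniIdeal K J :=
    le_inf (iniIdeal_mono inf_le_left) (iniIdeal_mono inf_le_right)
  refine eq_of_le_of_degreePiece_le hle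
    ((isHomogeneous_iniIdeal I).inf (isHomogeneous_iniIdeal J)) fun d => ?_
  refine (Submodule.eq_of_le_of_finrank_eq (degreePiece_mono hle d) ?_).ge
  have hIJ := Submodule.finrank_sup_add_finrank_inf_eq (degreePiece I d) (degreePiece J d)
  have hini := Submodule.finrank_sup_add_finrank_inf_eq
    (degreePiece (iniIdeal K I) d) (degreePiece (iniIdeal K J) d)
  rw [← degreePiece_sup hI hJ, ← degreePiece_inf] at hIJ
  rw [← degreePiece_sup (isHomogeneous_iniIdeal I) (isHomogeneous_iniIdeal J), ← h,
    ← degreePiece_inf, finrank_degreePiece_iniIdeal (hI.sup hJ), finrank_degreePiece_iniIdeal hI,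
    finrank_degreePiece_iniIdeal hJ] at hini
  rw [finrank_degreePiece_iniIdeal (hI.inf hJ)]
  omega

theorem IsLeadExp.killVars {s : Set (Fin m ×ₗ Fin n)} {p : PolyS K m n}
    {d : (Fin m ×ₗ Fin n) →₀ ℕ} (h : IsLeadExp K p d) (hd : ∀ v ∈ s, d v = 0) :
    IsLeadExp K (killVars s p) d :=
  h.of_support_subset
    (by rw [mem_support_iff, coeff_killVars_of_forall hd]; exact mem_support_iff.mp h.1)
    (support_killVars_subset p)

theorem iniIdeal_span_X_sup_le {s : Set (Fin m ×ₗ Fin n)} {W : Ideal (PolyS K m n)}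
    (hW : ∀ p ∈ W, killVars s p ∈ W) :
    iniIdeal K (Ideal.span (X '' s) ⊔ W) ≤ Ideal.span (X '' s) ⊔ iniIdeal K W := by
  rw [iniIdeal, Ideal.span_le]
  rintro _ ⟨p, hp, d, hd, rfl⟩
  by_cases hds : ∀ v ∈ s, d v = 0
  · obtain ⟨a, ha, b, hb, rfl⟩ := Submodule.mem_sup.mp hp
    have hk : killVars s (a + b) ∈ W := by
      rw [map_add, killVars_eq_zero_of_mem_span ha, zero_add]
      exact hW b hb
    exact Ideal.mem_sup_right (monomial_mem_iniIdeal hk (hd.killVars hds))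
  · simp only [not_forall, exists_prop] at hds
    refine Ideal.mem_sup_left (mem_ideal_span_X_image.mpr fun w hw => ?_)
    rw [Finset.mem_singleton.mp (support_monomial_subset hw)]
    exact hds

theorem span_X_le_iniIdeal {s : Set (Fin m ×ₗ Fin n)} {I : Ideal (PolyS K m n)}
    (h : Ideal.span (X '' s) ≤ I) : Ideal.span (X '' s) ≤ iniIdeal K I := by
  rw [Ideal.span_le]
  rintro _ ⟨v, hv, rfl⟩
  exact monomial_mem_iniIdeal (h (Ideal.subset_span ⟨v, hv, rfl⟩)) (isLeadExp_monomial_one _)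

def columnVars (m : ℕ) (A : Finset (Fin n)) : Set (Fin m ×ₗ Fin n) := {v | (ofLex v).2 ∈ A}

theorem varsIdeal_eq_span_X (A : Finset (Fin n)) :
    varsIdeal K m A = Ideal.span (X '' columnVars m A) := by
  rw [varsIdeal]
  congr 1
  ext f
  constructor
  · rintro ⟨k, j, hj, rfl⟩
    exact ⟨toLex (k, j), hj, rfl⟩
  · rintro ⟨v, hv, rfl⟩
    exact ⟨(ofLex v).1, (ofLex v).2, hv, rfl⟩

theorem killVars_eq_zero_of_mem_varsIdeal {A : Finset (Fin n)} {p : PolyS K m n}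
    (hp : p ∈ varsIdeal K m A) : killVars (columnVars m A) p = 0 :=
  killVars_eq_zero_of_mem_span (varsIdeal_eq_span_X (K := K) A ▸ hp)

theorem sub_killVars_mem_varsIdeal (A : Finset (Fin n)) (p : PolyS K m n) :
    p - killVars (columnVars m A) p ∈ varsIdeal K m A :=
  varsIdeal_eq_span_X (K := K) A ▸ sub_killVars_mem_span p

theorem xv_mem_varsIdeal {A : Finset (Fin n)} {j : Fin n} (hj : j ∈ A) (k : Fin m) :
    xv K k j ∈ varsIdeal K m A :=
  Ideal.subset_span ⟨k, j, hj, rfl⟩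

theorem pminor_mem_varsIdeal {A : Finset (Fin n)} {i j : Fin n} (h : i ∈ A ∨ j ∈ A)
    (k l : Fin m) : pminor K k l i j ∈ varsIdeal K m A := by
  rcases h with hi | hj
  · exact Ideal.sub_mem _ (Ideal.mul_mem_right _ _ (xv_mem_varsIdeal hi k))
      (Ideal.mul_mem_right _ _ (xv_mem_varsIdeal hi l))
  · exact Ideal.sub_mem _ (Ideal.mul_mem_left _ _ (xv_mem_varsIdeal hj l))
      (Ideal.mul_mem_left _ _ (xv_mem_varsIdeal hj k))

theorem pminor_mem_gbei {G : SimpleGraph (Fin n)} {i j : Fin n} (hij : G.Adj i j) (k l : Fin m) :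
    pminor K k l i j ∈ gbei K m G := by
  wlog hij' : i < j generalizing i j
  · rw [show pminor K k l i j = -pminor K k l j i by simp only [pminor]; ring, neg_mem_iff]
    exact this hij.symm ((lt_or_gt_of_ne hij.ne).resolve_left hij')
  rcases lt_trichotomy k l with hkl | rfl | hlk
  · exact Ideal.subset_span ⟨k, l, i, j, hkl, hij', hij, rfl⟩
  · rw [show pminor K k k i j = 0 by simp only [pminor]; ring]
    exact Ideal.zero_mem _
  · rw [show pminor K k l i j = -pminor K l k i j by simp only [pminor]; ring, neg_mem_iff]
    exact Ideal.subset_span ⟨l, k, i, j, hlk, hij', hij, rfl⟩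

theorem gbei_mono {G H : SimpleGraph (Fin n)} (h : G ≤ H) : gbei K m G ≤ gbei K m H :=
  Ideal.span_mono fun _ ⟨k, l, i, j, hkl, hij, hadj, hf⟩ => ⟨k, l, i, j, hkl, hij, h hadj, hf⟩

theorem delVerts_le (G : SimpleGraph (Fin n)) (A : Finset (Fin n)) : delVerts G A ≤ G :=
  fun _ _ h => h.1

theorem gbei_le_varsIdeal_sup (G : SimpleGraph (Fin n)) (A : Finset (Fin n)) :
    gbei K m G ≤ varsIdeal K m A ⊔ gbei K m (delVerts G A) := by
  rw [gbei, Ideal.span_le]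
  rintro _ ⟨k, l, i, j, hkl, hij, hadj, rfl⟩
  by_cases hA : i ∈ A ∨ j ∈ A
  · exact Ideal.mem_sup_left (pminor_mem_varsIdeal hA k l)
  · rw [not_or] at hA
    exact Ideal.mem_sup_right (Ideal.subset_span ⟨k, l, i, j, hkl, hij, ⟨hadj, hA⟩, rfl⟩)

theorem killVars_pminor {A : Finset (Fin n)} {i j : Fin n} (hi : i ∉ A) (hj : j ∉ A)
    (k l : Fin m) : killVars (columnVars m A) (pminor K k l i j) = pminor K k l i j := by
  have hX : ∀ (k' : Fin m) (c : Fin n), c ∉ A →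
      killVars (columnVars m A) (xv K k' c) = xv K k' c :=
    fun _ _ hc => killVars_X_of_notMem hc
  simp only [pminor, map_sub, map_mul, hX _ _ hi, hX _ _ hj]

theorem killVars_mem_gbei_delVerts {G : SimpleGraph (Fin n)} (A : Finset (Fin n))
    {p : PolyS K m n} (hp : p ∈ gbei K m G) :
    killVars (columnVars m A) p ∈ gbei K m (delVerts G A) := by
  suffices Ideal.map (killVars (columnVars m A)) (gbei K m G) ≤ gbei K m (delVerts G A) from
    this (Ideal.mem_map_of_mem _ hp)
  rw [gbei, Ideal.map_span, Ideal.span_le]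
  rintro _ ⟨_, ⟨k, l, i, j, hkl, hij, hadj, rfl⟩, rfl⟩
  by_cases hA : i ∈ A ∨ j ∈ A
  · rw [SetLike.mem_coe, killVars_eq_zero_of_mem_varsIdeal (pminor_mem_varsIdeal hA k l)]
    exact Ideal.zero_mem _
  · rw [not_or] at hA
    rw [SetLike.mem_coe, killVars_pminor hA.1 hA.2]
    exact Ideal.subset_span ⟨k, l, i, j, hkl, hij, ⟨hadj, hA⟩, rfl⟩

theorem xv_mul_pminor_mem_gbei {G : SimpleGraph (Fin n)} {a u v : Fin n} (hau : G.Adj a u)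
    (hav : G.Adj a v) (k₀ k l : Fin m) : xv K k₀ a * pminor K k l u v ∈ gbei K m G := by
  have : xv K k₀ a * pminor K k l u v =
      xv K l v * pminor K k₀ k a u - xv K k v * pminor K k₀ l a u +
        xv K k₀ u * pminor K k l a v := by
    simp only [pminor]; ring
  rw [this]
  exact Ideal.add_mem _ (Ideal.sub_mem _ (Ideal.mul_mem_left _ _ (pminor_mem_gbei hau k₀ k))
    (Ideal.mul_mem_left _ _ (pminor_mem_gbei hau k₀ l)))
    (Ideal.mul_mem_left _ _ (pminor_mem_gbei hav k l))

theorem gbei_eq_inf {G H : SimpleGraph (Fin n)} {A : Finset (Fin n)} (hGH : G ≤ H)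
    (hnew : ∀ u v, H.Adj u v → ¬ G.Adj u v → u ∉ A ∧ v ∉ A ∧ ∀ a ∈ A, G.Adj a u ∧ G.Adj a v) :
    gbei K m G = gbei K m H ⊓ (varsIdeal K m A ⊔ gbei K m (delVerts G A)) := by
  refine le_antisymm (le_inf (gbei_mono hGH) (gbei_le_varsIdeal_sup G A)) ?_
  set κ := killVars (R := K) (columnVars m A)
  set S : Set (PolyS K m n) := {f | ∃ (k l : Fin m) (u v : Fin n),
    H.Adj u v ∧ ¬ G.Adj u v ∧ f = pminor K k l u v}
  have hH : gbei K m H ≤ gbei K m G ⊔ Ideal.span S := by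
    rw [gbei, Ideal.span_le]
    rintro _ ⟨k, l, u, v, hkl, huv, hadj, rfl⟩
    by_cases hG : G.Adj u v
    · exact Ideal.mem_sup_left (pminor_mem_gbei hG k l)
    · exact Ideal.mem_sup_right (Ideal.subset_span ⟨k, l, u, v, hadj, hG, rfl⟩)
  have hVS : varsIdeal K m A * Ideal.span S ≤ gbei K m G := by
    rw [varsIdeal, Ideal.span_mul_span, Ideal.span_le]
    rintro _ ⟨_, ⟨k₀, a, ha, rfl⟩, _, ⟨k, l, u, v, hH, hG, rfl⟩, rfl⟩
    obtain ⟨-, -, hA⟩ := hnew u v hH hG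
    exact xv_mul_pminor_mem_gbei (hA a ha).1 (hA a ha).2 k₀ k l
  have hκS : ∀ g ∈ S, κ g = g := by
    rintro _ ⟨k, l, u, v, hH, hG, rfl⟩
    obtain ⟨hu, hv, -⟩ := hnew u v hH hG
    exact killVars_pminor hu hv k l
  have hκ : ∀ p ∈ varsIdeal K m A ⊔ gbei K m (delVerts G A), κ p ∈ gbei K m G := by
    intro p hp
    obtain ⟨a, ha, b, hb, rfl⟩ := Submodule.mem_sup.mp hp
    rw [map_add, killVars_eq_zero_of_mem_varsIdeal ha, zero_add]
    exact gbei_mono ((delVerts_le _ A).trans (delVerts_le G A)) (killVars_mem_gbei_delVerts A hb)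
  rintro f ⟨hfH, hfV⟩
  obtain ⟨g, hg, h, hh, rfl⟩ := Submodule.mem_sup.mp (hH hfH)
  have hκh : κ g ∈ gbei K m G :=
    gbei_mono (delVerts_le G A) (killVars_mem_gbei_delVerts A hg)
  have hh' : h - κ h ∈ gbei K m G :=
    hVS (sub_map_mem_mul_span κ (sub_killVars_mem_varsIdeal A) hκS hh)
  have : g + h = g + (h - κ h) + (κ (g + h) - κ g) := by rw [map_add]; ring
  rw [this]
  exact Ideal.add_mem _ (Ideal.add_mem _ hg hh') (Ideal.sub_mem _ (hκ _ hfV) hκh)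

theorem iniIdeal_gbei_sup_eq {G H : SimpleGraph (Fin n)} {A : Finset (Fin n)}
    (hGH : delVerts G A ≤ H) :
    iniIdeal K (gbei K m H ⊔ (varsIdeal K m A ⊔ gbei K m (delVerts G A))) =
      iniIdeal K (gbei K m H) ⊔ iniIdeal K (varsIdeal K m A ⊔ gbei K m (delVerts G A)) := by
  refine le_antisymm ?_ (sup_le (iniIdeal_mono le_sup_left) (iniIdeal_mono le_sup_right))
  have hdel : delVerts G A ≤ delVerts H A := fun _ _ h => ⟨hGH h, h.2⟩
  have hκ : ∀ p ∈ gbei K m (delVerts H A),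
      killVars (columnVars m A) p ∈ gbei K m (delVerts H A) :=
    fun p hp => gbei_mono (delVerts_le _ A) (killVars_mem_gbei_delVerts A hp)
  calc iniIdeal K (gbei K m H ⊔ (varsIdeal K m A ⊔ gbei K m (delVerts G A)))
      ≤ iniIdeal K (varsIdeal K m A ⊔ gbei K m (delVerts H A)) :=
        iniIdeal_mono (sup_le (gbei_le_varsIdeal_sup H A)
          (sup_le_sup_left (gbei_mono hdel) _))
    _ ≤ varsIdeal K m A ⊔ iniIdeal K (gbei K m (delVerts H A)) := by
        simpa only [varsIdeal_eq_span_X] using iniIdeal_span_X_sup_le hκ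
    _ ≤ iniIdeal K (gbei K m H) ⊔ iniIdeal K (varsIdeal K m A ⊔ gbei K m (delVerts G A)) := by
        refine sup_le (le_sup_of_le_right ?_)
          (le_sup_of_le_left (iniIdeal_mono (gbei_mono (delVerts_le H A))))
        rw [varsIdeal_eq_span_X]
        exact span_X_le_iniIdeal le_sup_left

theorem isHomogeneous_gbei (G : SimpleGraph (Fin n)) :
    (gbei K m G).IsHomogeneous (homogeneousSubmodule _ K) := by
  refine Ideal.homogeneous_span _ _ ?_
  rintro _ ⟨k, l, i, j, -, -, -, rfl⟩
  exact ⟨2, ((isHomogeneous_X K _).mul (isHomogeneous_X K _)).sub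
    ((isHomogeneous_X K _).mul (isHomogeneous_X K _))⟩

theorem isHomogeneous_varsIdeal (A : Finset (Fin n)) :
    (varsIdeal K m A).IsHomogeneous (homogeneousSubmodule _ K) := by
  refine Ideal.homogeneous_span _ _ ?_
  rintro _ ⟨k, j, -, rfl⟩
  exact ⟨1, isHomogeneous_X K _⟩

end Polynomials

theorem iniIdeal_inf_decomposition_general (K : Type) [Field K] (m : ℕ)
    (n r q : ℕ)
    (G : SimpleGraph (Fin n))
    (F : Fin r → Finset (Fin n))
    (hmc : ∀ i, IsMaxClique G (F i))
    (lst : Fin r)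
    (t : Fin q → Fin r)
    (A : Finset (Fin n))
    (hA1 : ∀ i, F (t i) ∩ F lst = A)
    (G' : SimpleGraph (Fin n))
    (hG' : G' = G ⊔ cliqueOn (F lst ∪ Finset.univ.biUnion fun i => F (t i)))
    (J₁ J₂ : Ideal (PolyS K m n))
    (hJ₁ : J₁ = gbei K m G')
    (hJ₂ : J₂ = varsIdeal K m A + gbei K m (delVerts G A)) :
    iniIdeal K (J₁ + J₂) = iniIdeal K J₁ + iniIdeal K J₂ ∧
    iniIdeal K (gbei K m G) = iniIdeal K (J₁ ⊓ J₂) ∧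
    iniIdeal K (J₁ ⊓ J₂) = iniIdeal K J₁ ⊓ iniIdeal K J₂ := by
  subst hJ₁ hJ₂
  simp only [Submodule.add_eq_sup]
  have hGG' : G ≤ G' := hG' ▸ le_sup_left
  have hsup := iniIdeal_gbei_sup_eq (K := K) (m := m) ((delVerts_le G A).trans hGG')
  refine ⟨hsup, ?_, iniIdeal_inf_eq_of_iniIdeal_sup_eq (isHomogeneous_gbei _)
    ((isHomogeneous_varsIdeal A).sup (isHomogeneous_gbei _)) hsup⟩
  rw [← gbei_eq_inf hGG' fun u v huv hG =>
    sup_cliqueOn_adj_of_not_adj (hmc lst).1 (fun i => (hmc (t i)).1) hA1 (hG' ▸ huv) hG]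

/-- in the leaf-order setup, with `J₁ = 𝔍_{G'}` and
`J₂ = (x_{kj} : j ∈ A) + 𝔍_{G''}`, one has
`ini_<(J₁ + J₂) = ini_<(J₁) + ini_<(J₂)` and
`ini_<(𝔍_G) = ini_<(J₁ ∩ J₂) = ini_<(J₁) ∩ ini_<(J₂)`. -/
theorem iniIdeal_inf_decomposition (K : Type) [Field K] (m : ℕ) (hm : 2 ≤ m)
    (n r q α : ℕ) (hn : 2 ≤ n) (hr : 1 < r) (hq : 1 ≤ q) (hα : 1 ≤ α)
    (G : SimpleGraph (Fin n)) (hGconn : G.Connected) (hgb : IsGeneralizedBlockGraph G)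
    (F : Fin r → Finset (Fin n))
    (hmc : ∀ i, IsMaxClique G (F i))
    (hFinj : Function.Injective F)
    (hFall : ∀ s : Finset (Fin n), IsMaxClique G s → ∃ i, F i = s)
    (lst : Fin r) (hlst : ∀ i : Fin r, i ≤ lst)
    (hleaf : ∀ i : Fin r, (i : ℕ) ≠ 0 → ∃ j, j < i ∧ ∀ k, k < i → F k ∩ F i ⊆ F j ∩ F i)
    (t : Fin q → Fin r) (htinj : Function.Injective t) (htne : ∀ i, t i ≠ lst)
    (hbr : ∀ k : Fin r, k ≠ lst → ((∃ i, t i = k) ↔ (F k ∩ F lst).Nonempty))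
    (A : Finset (Fin n)) (hcard : A.card = α)
    (hA1 : ∀ i, F (t i) ∩ F lst = A)
    (hA2 : ∀ i j, i ≠ j → F (t i) ∩ F (t j) = A)
    (G' : SimpleGraph (Fin n))
    (hG' : G' = G ⊔ cliqueOn (F lst ∪ Finset.univ.biUnion fun i => F (t i)))
    (J₁ J₂ : Ideal (PolyS K m n))
    (hJ₁ : J₁ = gbei K m G')
    (hJ₂ : J₂ = varsIdeal K m A + gbei K m (delVerts G A)) :
    iniIdeal K (J₁ + J₂) = iniIdeal K J₁ + iniIdeal K J₂ ∧
    iniIdeal K (gbei K m G) = iniIdeal K (J₁ ⊓ J₂) ∧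
    iniIdeal K (J₁ ⊓ J₂) = iniIdeal K J₁ ⊓ iniIdeal K J₂ :=
  iniIdeal_inf_decomposition_general K m n r q G F hmc lst t A hA1 G' hG' J₁ J₂ hJ₁ hJ₂

end GBEI
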